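/- Let H be a real Hilbert space, A : H →L[ℝ] H a bounded self-adjoint linear operator that is coercive with constant α > 0, and (φ_k)_{k ∈ ℕ} a Hilbert (orthonormal) basis of H consisting of eigenvectors of A with A φ_k = λ_k φ_k, where (λ_k) is monotone nondecreasing and λ_0 > 0. Then for every g ∈ H, every T > 0 and every N ∈ ℕ, the solution χ of A χ = g − ∑_{k < N} exp(−λ_k T) ⟪g, φ_k⟫ φ_k satisfies ‖χ − ∫₀^T exp(−t • A) g dt‖ ≤ (exp(−λ_N T) / α) · ‖g‖. -/

import Mathlib

set_option maxHeartbeats 1000000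

private lemma exp_adjoint_eq {H : Type*} [NormedAddCommGroup H] [InnerProductSpace ℝ H]
    [CompleteSpace H] (B : H →L[ℝ] H) (hB : ContinuousLinearMap.adjoint B = B) :
    ContinuousLinearMap.adjoint (NormedSpace.exp B) = NormedSpace.exp B := by
  rw [← ContinuousLinearMap.star_eq_adjoint, NormedSpace.star_exp,
    ContinuousLinearMap.star_eq_adjoint, hB]

private lemma exp_apply_eigen {H : Type*} [NormedAddCommGroup H] [NormedSpace ℝ H]
    [CompleteSpace H] (B : H →L[ℝ] H) (μ : ℝ) (v : H) (hv : B v = μ • v) :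
    NormedSpace.exp B v = Real.exp μ • v := by
  have hpow : ∀ n : ℕ, (B ^ n) v = μ ^ n • v := by
    intro n
    induction n with
    | zero => simp
    | succ n ih =>
      rw [pow_succ', ContinuousLinearMap.mul_apply, ih, map_smul, hv, smul_smul, ← pow_succ]
  have hsum := NormedSpace.expSeries_summable' (𝕂 := ℝ) B
  have h1 : NormedSpace.exp B v = ∑' n : ℕ, ((n.factorial : ℝ)⁻¹ • B ^ n) v := by
    rw [NormedSpace.exp_eq_tsum ℝ]
    exact ContinuousLinearMap.map_tsum (ContinuousLinearMap.apply ℝ H v) hsum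
  rw [h1]
  have h2 : ∀ n : ℕ, ((n.factorial : ℝ)⁻¹ • B ^ n) v = (((n.factorial : ℝ)⁻¹ * μ ^ n)) • v := by
    intro n
    rw [ContinuousLinearMap.smul_apply, hpow, smul_smul]
  simp_rw [h2]
  rw [Summable.tsum_smul_const]
  · congr 1
    rw [Real.exp_eq_exp_ℝ, NormedSpace.exp_eq_tsum ℝ]
    simp [smul_eq_mul]
  · simpa [smul_eq_mul] using NormedSpace.expSeries_summable' (𝕂 := ℝ) (𝔸 := ℝ) μ

private lemma integral_exp_neg_mul (T lam : ℝ) (hlam : lam ≠ 0) :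
    ∫ t in (0:ℝ)..T, Real.exp (-t * lam) = (1 - Real.exp (-lam * T)) / lam := by
  have hderiv : ∀ t ∈ Set.uIcc (0:ℝ) T,
      HasDerivAt (fun s : ℝ => -Real.exp (-s * lam) / lam) (Real.exp (-t * lam)) t := by
    intro t _
    have h1 : HasDerivAt (fun s : ℝ => -s * lam) (-1 * lam) t :=
      (hasDerivAt_id t).neg.mul_const lam
    have h2 := (h1.exp.neg).div_const lam
    refine h2.congr_deriv ?_
    field_simp
  have hint : IntervalIntegrable (fun t : ℝ => Real.exp (-t * lam)) MeasureTheory.volume 0 T :=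
    (Real.continuous_exp.comp ((continuous_id.neg).mul continuous_const)).intervalIntegrable 0 T
  rw [intervalIntegral.integral_eq_sub_of_hasDerivAt hderiv hint]
  field_simp
  ring_nf
  rw [Real.exp_zero]
  ring

/-- Abstract form of the modified elliptic corrector estimate: if `χ` solves
`A χ = g - ∑_{k<N} exp(-lam k * T) ⟪g, φ k⟫ φ k`, then
`‖χ - ∫₀^T exp(-t • A) g dt‖ ≤ (exp(-lam N * T)/α) ‖g‖`. -/
theorem modified_elliptic_corrector_error
    {H : Type*} [NormedAddCommGroup H] [InnerProductSpace ℝ H] [CompleteSpace H]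
    (A : H →L[ℝ] H) (α : ℝ) (hα : 0 < α)
    (hsa : ∀ x y : H, (inner ℝ (A x) y : ℝ) = inner ℝ x (A y))
    (hcoer : ∀ x : H, α * ‖x‖ ^ 2 ≤ (inner ℝ (A x) x : ℝ))
    (φ : HilbertBasis ℕ ℝ H) (lam : ℕ → ℝ) (hmono : Monotone lam) (hpos : 0 < lam 0)
    (heig : ∀ k, A (φ k) = lam k • φ k)
    (g : H) (T : ℝ) (hT : 0 < T) (N : ℕ) :
    ∀ χ : H,
      A χ = g - ∑ k ∈ Finset.range N, Real.exp (-(lam k) * T) • ((inner ℝ g (φ k) : ℝ) • φ k) →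
      ‖χ - ∫ t in (0:ℝ)..T, NormedSpace.exp ((-t) • A) g‖ ≤
        Real.exp (-(lam N) * T) / α * ‖g‖ := by
  intro χ hχ
  set I : H := ∫ t in (0:ℝ)..T, NormedSpace.exp ((-t) • A) g with hI
  -- orthonormality facts
  have hON := φ.orthonormal
  have hnorm : ∀ k, ‖φ k‖ = 1 := hON.1
  have hinner : ∀ j k, (inner ℝ (φ j) (φ k) : ℝ) = if j = k then 1 else 0 :=
    orthonormal_iff_ite.mp hON
  -- α ≤ lam k
  have hαlam : ∀ k, α ≤ lam k := by
    intro k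
    have h := hcoer (φ k)
    rw [heig k, real_inner_smul_left, real_inner_self_eq_norm_sq, hnorm k] at h
    simpa [hnorm k] using h
  have hlampos : ∀ k, 0 < lam k := fun k => lt_of_lt_of_le hα (hαlam k)
  -- self-adjointness of (-t) • A and of its exponential
  have hadj : ∀ t : ℝ, ContinuousLinearMap.adjoint ((-t) • A) = (-t) • A := by
    intro t
    symm
    rw [ContinuousLinearMap.eq_adjoint_iff]
    intro x y
    simp only [ContinuousLinearMap.smul_apply, real_inner_smul_left, real_inner_smul_right,
      hsa x y]
  have hexp_sa : ∀ (t : ℝ) (x y : H),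
      (inner ℝ (NormedSpace.exp ((-t) • A) x) y : ℝ) = inner ℝ x (NormedSpace.exp ((-t) • A) y) := by
    intro t x y
    conv_lhs => rw [← exp_adjoint_eq ((-t) • A) (hadj t)]
    rw [ContinuousLinearMap.adjoint_inner_left]
  -- eigenvalue action of the exponential
  have hexp_eig : ∀ (t : ℝ) (k : ℕ),
      NormedSpace.exp ((-t) • A) (φ k) = Real.exp (-t * lam k) • φ k := by
    intro t k
    refine exp_apply_eigen _ _ _ ?_
    rw [ContinuousLinearMap.smul_apply, heig k, smul_smul]
  -- continuity and integrability
  have hcont : Continuous fun t : ℝ => NormedSpace.exp ((-t) • A) g := by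
    exact ((ContinuousLinearMap.apply ℝ H g).continuous).comp
      ((continuous_iff_continuousAt.2 fun x => (NormedSpace.exp_analytic (𝕂 := ℝ) x).continuousAt).comp ((continuous_neg).smul continuous_const))
  have hintg : IntervalIntegrable (fun t : ℝ => NormedSpace.exp ((-t) • A) g)
      MeasureTheory.volume 0 T := hcont.intervalIntegrable 0 T
  -- coefficients of the integral
  have hIcoef : ∀ k, (inner ℝ I (φ k) : ℝ) =
      (1 - Real.exp (-(lam k) * T)) / lam k * (inner ℝ g (φ k) : ℝ) := by
    intro k
    have h1 : (inner ℝ I (φ k) : ℝ) = inner ℝ (φ k) I := real_inner_comm _ _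
    have h2 : (inner ℝ (φ k) I : ℝ) =
        ∫ t in (0:ℝ)..T, (inner ℝ (φ k) (NormedSpace.exp ((-t) • A) g) : ℝ) := by
      rw [hI]
      exact ((innerSL ℝ (φ k)).intervalIntegral_comp_comm hintg).symm
    have h3 : ∀ t : ℝ, (inner ℝ (φ k) (NormedSpace.exp ((-t) • A) g) : ℝ) =
        Real.exp (-t * lam k) * (inner ℝ g (φ k) : ℝ) := by
      intro t
      rw [real_inner_comm, hexp_sa t g (φ k), hexp_eig t k, real_inner_smul_right]
    rw [h1, h2]
    simp_rw [h3]
    rw [intervalIntegral.integral_mul_const, integral_exp_neg_mul T (lam k) (hlampos k).ne']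
  -- coefficients of χ
  have hχcoef : ∀ k, (inner ℝ χ (φ k) : ℝ) =
      ((inner ℝ g (φ k) : ℝ) - (if k < N then Real.exp (-(lam k) * T) * (inner ℝ g (φ k) : ℝ) else 0))
        / lam k := by
    intro k
    have h1 : (inner ℝ (A χ) (φ k) : ℝ) = lam k * inner ℝ χ (φ k) := by
      rw [hsa, heig k, real_inner_smul_right]
    have h2 : (inner ℝ (A χ) (φ k) : ℝ) = (inner ℝ g (φ k) : ℝ) -
        (if k < N then Real.exp (-(lam k) * T) * (inner ℝ g (φ k) : ℝ) else 0) := by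
      rw [hχ, inner_sub_left, sum_inner]
      congr 1
      have : ∀ j ∈ Finset.range N,
          (inner ℝ (Real.exp (-(lam j) * T) • ((inner ℝ g (φ j) : ℝ) • φ j)) (φ k) : ℝ) =
          if j = k then Real.exp (-(lam j) * T) * (inner ℝ g (φ j) : ℝ) else 0 := by
        intro j _
        rw [real_inner_smul_left, real_inner_smul_left, hinner j k]
        split <;> simp
      rw [Finset.sum_congr rfl this, Finset.sum_ite_eq' (Finset.range N)]
      simp [Finset.mem_range]
    rw [h1] at h2
    rw [eq_div_iff (hlampos k).ne']
    linear_combination h2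
  -- the difference coefficients
  set C : ℝ := Real.exp (-(lam N) * T) / α with hC
  have hCnonneg : 0 ≤ C := div_nonneg (Real.exp_nonneg _) hα.le
  have hdiff : ∀ k, (inner ℝ (χ - I) (φ k) : ℝ) =
      if k < N then 0 else Real.exp (-(lam k) * T) * (inner ℝ g (φ k) : ℝ) / lam k := by
    intro k
    rw [inner_sub_left, hχcoef k, hIcoef k]
    have h0 : lam k ≠ 0 := (hlampos k).ne'
    split
    · field_simp
      ring
    · field_simp
      ring
  -- bound each coefficient
  have hbound : ∀ k, (inner ℝ (χ - I) (φ k) : ℝ) * (inner ℝ (φ k) (χ - I) : ℝ) ≤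
      C ^ 2 * ((inner ℝ g (φ k) : ℝ) * (inner ℝ (φ k) g : ℝ)) := by
    intro k
    have e1 : (inner ℝ (φ k) (χ - I) : ℝ) = inner ℝ (χ - I) (φ k) := real_inner_comm _ _
    have e2 : (inner ℝ (φ k) g : ℝ) = inner ℝ g (φ k) := real_inner_comm _ _
    rw [e1, e2, hdiff k]
    split
    · simpa using mul_nonneg (sq_nonneg C) (mul_self_nonneg (inner ℝ g (φ k) : ℝ))
    · rename_i hk
      have hkN : N ≤ k := Nat.le_of_not_lt hk
      have h1 : Real.exp (-(lam k) * T) ≤ Real.exp (-(lam N) * T) := by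
        apply Real.exp_le_exp.mpr
        have := hmono hkN
        nlinarith
      have habs : |Real.exp (-(lam k) * T) * (inner ℝ g (φ k) : ℝ) / lam k| ≤
          C * |(inner ℝ g (φ k) : ℝ)| := by
        rw [abs_div, abs_mul, abs_of_pos (hlampos k), abs_of_pos (Real.exp_pos _)]
        rw [div_le_iff₀ (hlampos k), hC]
        have h3 : 1 ≤ lam k / α := (one_le_div hα).mpr (hαlam k)
        have hstep : Real.exp (-(lam k) * T) * |(inner ℝ g (φ k) : ℝ)| ≤
            Real.exp (-(lam N) * T) * |(inner ℝ g (φ k) : ℝ)| :=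
          mul_le_mul_of_nonneg_right h1 (abs_nonneg _)
        calc Real.exp (-(lam k) * T) * |(inner ℝ g (φ k) : ℝ)|
            ≤ Real.exp (-(lam N) * T) * |(inner ℝ g (φ k) : ℝ)| := hstep
          _ ≤ Real.exp (-(lam N) * T) * |(inner ℝ g (φ k) : ℝ)| * (lam k / α) :=
              le_mul_of_one_le_right (by positivity) h3
          _ = Real.exp (-(lam N) * T) / α * |(inner ℝ g (φ k) : ℝ)| * lam k := by ring
      set d : ℝ := Real.exp (-(lam k) * T) * (inner ℝ g (φ k) : ℝ) / lam k with hd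
      calc d * d = |d| * |d| := (abs_mul_abs_self d).symm
        _ ≤ (C * |(inner ℝ g (φ k) : ℝ)|) * (C * |(inner ℝ g (φ k) : ℝ)|) :=
            mul_le_mul habs habs (abs_nonneg d) (mul_nonneg hCnonneg (abs_nonneg _))
        _ = C ^ 2 * (|(inner ℝ g (φ k) : ℝ)| * |(inner ℝ g (φ k) : ℝ)|) := by ring
        _ = C ^ 2 * ((inner ℝ g (φ k) : ℝ) * (inner ℝ g (φ k) : ℝ)) := by
            rw [abs_mul_abs_self]
  -- Parseval
  have hP1 : HasSum (fun k => (inner ℝ (χ - I) (φ k) : ℝ) * (inner ℝ (φ k) (χ - I) : ℝ))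
      ((inner ℝ (χ - I) (χ - I) : ℝ)) := φ.hasSum_inner_mul_inner _ _
  have hP2 : HasSum (fun k => C ^ 2 * ((inner ℝ g (φ k) : ℝ) * (inner ℝ (φ k) g : ℝ)))
      (C ^ 2 * (inner ℝ g g : ℝ)) := (φ.hasSum_inner_mul_inner g g).mul_left _
  have hle : (inner ℝ (χ - I) (χ - I) : ℝ) ≤ C ^ 2 * (inner ℝ g g : ℝ) :=
    hasSum_le hbound hP1 hP2
  rw [real_inner_self_eq_norm_sq, real_inner_self_eq_norm_sq] at hle
  have hfin : ‖χ - I‖ ^ 2 ≤ (C * ‖g‖) ^ 2 := by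
    calc ‖χ - I‖ ^ 2 ≤ C ^ 2 * ‖g‖ ^ 2 := hle
      _ = (C * ‖g‖) ^ 2 := by ring
  exact (pow_le_pow_iff_left₀ (norm_nonneg _) (mul_nonneg hCnonneg (norm_nonneg g))
    two_ne_zero).mp hfin
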